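/- Let k ≥ 1 be an integer, let s be a complex number with σ = Re s > 1, and let α be a complex number with |α| < k. Then Σ'_{n∈ℕ, n≥1} |c_{n,k}(s)|·|α|^n/n! ≤ ζ(σ)·(1 − |α|/k)^{−|s|}, where ζ(σ) = Σ_{m≥1} m^{−σ} (a real series), |s| is the complex absolute value of s, and (1 − |α|/k)^{−|s|} is a real power (Real.rpow). -/

import Mathlib

noncomputable def zetaK (k : ℕ) (s : ℂ) : ℂ :=
  riemannZeta s - ∑ m ∈ Finset.Ico 1 k, (m : ℂ) ^ (-s)

noncomputable def c (n k : ℕ) (s : ℂ) : ℂ :=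
  (∏ j ∈ Finset.range n, (s + j)) * zetaK k (s + n)

open Finset

/-!
Bound the terms of the series one by one. Since `|s + j| ≤ |s| + j` and, for `Re s > 1`,
`|ζ_k(s + n)| ≤ ∑_{m ≥ 0} (m + k)^(-σ-n) ≤ ζ(σ) k^(-n)`, the `n`-th term is at most
`ζ(σ) binom(|s| + n - 1, n) (|α| / k)^n`. These majorants are `ζ(σ)` times the coefficients of
the binomial series `∑ binom(a + n - 1, n) x^n = (1 - x)^(-a)`, evaluated at `a = |s|` and
`x = |α| / k < 1`.
-/

theorem Ring.choose_add_natCast_sub_one {K : Type*} [Field K] [CharZero K] (a : K) (n : ℕ) :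
    Ring.choose (a + n - 1) n = (∏ j ∈ range n, (a + j)) / n.factorial := by
  rw [Ring.choose_eq_smul, Polynomial.descPochhammer_smeval_eq_ascPochhammer,
    Polynomial.ascPochhammer_smeval_eq_eval, smul_eq_mul, inv_mul_eq_div,
    show a + n - 1 - n + 1 = a by ring]
  congr 1
  induction n with
  | zero => simp
  | succ n ih => rw [ascPochhammer_succ_eval, ih, prod_range_succ]

theorem Real.hasSum_choose_mul_pow (a : ℝ) {x : ℝ} (hx : |x| < 1) :
    HasSum (fun n : ℕ ↦ Ring.choose (a + n - 1) n * x ^ n) ((1 - x) ^ (-a)) := by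
  have hx' : x ∈ Metric.eball (0 : ℝ) 1 := by
    rwa [Metric.mem_eball, edist_zero_right, enorm_eq_nnnorm, ENNReal.coe_lt_one_iff,
      ← NNReal.coe_lt_one, coe_nnnorm, Real.norm_eq_abs]
  have := (one_div_one_sub_rpow_hasFPowerSeriesOnBall_zero a).hasSum hx'
  rw [Real.rpow_neg (by linarith [le_abs_self x]), inv_eq_one_div]
  simpa [FormalMultilinearSeries.ofScalars_apply_eq, mul_comm] using this

theorem norm_prod_add_natCast_le (s : ℂ) (n : ℕ) :
    ‖∏ j ∈ range n, (s + j)‖ ≤ ∏ j ∈ range n, (‖s‖ + j) := by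
  rw [norm_prod]
  gcongr with j
  exact (norm_add_le _ _).trans_eq (by rw [Complex.norm_natCast])

theorem zetaK_eq_tsum (k : ℕ) {w : ℂ} (hw : 1 < w.re) :
    zetaK k w = ∑' m : ℕ, ((m + k : ℕ) : ℂ) ^ (-w) := by
  have hw0 : -w ≠ 0 := neg_ne_zero.mpr fun h ↦ by simp [h] at hw; linarith
  have hsum : Summable fun n : ℕ ↦ (n : ℂ) ^ (-w) := by
    simpa [Complex.cpow_neg] using Complex.summable_one_div_nat_cpow.mpr hw
  have hzeta : riemannZeta w = ∑' n : ℕ, (n : ℂ) ^ (-w) := by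
    simp [zeta_eq_tsum_one_div_nat_cpow hw, Complex.cpow_neg]
  have hhead : ∑ m ∈ Ico 1 k, (m : ℂ) ^ (-w) = ∑ m ∈ range k, (m : ℂ) ^ (-w) := by
    rw [range_eq_Ico]
    refine sum_subset (Ico_subset_Ico_left zero_le_one) fun m hm hm' ↦ ?_
    obtain rfl : m = 0 := by simp only [mem_Ico] at hm hm'; omega
    simp [hw0]
  rw [zetaK, hzeta, ← hsum.sum_add_tsum_nat_add k, hhead, add_sub_cancel_left]

theorem norm_natCast_add_cpow_neg_le {k : ℕ} (hk : 1 ≤ k) {s : ℂ} (hs : 0 ≤ s.re) (m n : ℕ) :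
    ‖((m + k : ℕ) : ℂ) ^ (-(s + n))‖ ≤ ((m : ℝ) + 1) ^ (-s.re) * (k : ℝ)⁻¹ ^ n := by
  have hmk : 0 < m + k := by omega
  rw [neg_add, Complex.cpow_add _ _ (by exact_mod_cast hmk.ne'), norm_mul,
    Complex.norm_natCast_cpow_of_pos hmk, Complex.cpow_neg, Complex.cpow_natCast, norm_inv,
    norm_pow, Complex.norm_natCast, Complex.neg_re, ← inv_pow]
  have hk' : (1 : ℝ) ≤ k := by exact_mod_cast hk
  have hm : (m : ℝ) + 1 ≤ (m + k : ℕ) := by push_cast; linarith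
  gcongr ?_ * ?_
  · exact Real.rpow_le_rpow_of_nonpos (by positivity) hm (by linarith)
  · gcongr
    exact_mod_cast Nat.le_add_left k m

theorem norm_zetaK_add_natCast_le {k : ℕ} (hk : 1 ≤ k) {s : ℂ} (hs : 1 < s.re) (n : ℕ) :
    ‖zetaK k (s + n)‖ ≤ (∑' m : ℕ, ((m : ℝ) + 1) ^ (-s.re)) * (k : ℝ)⁻¹ ^ n := by
  have hbound (m : ℕ) := norm_natCast_add_cpow_neg_le hk (s := s) (by linarith) m n
  have hsum : Summable fun m : ℕ ↦ ((m : ℝ) + 1) ^ (-s.re) * (k : ℝ)⁻¹ ^ n := by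
    refine Summable.mul_right _ ?_
    exact_mod_cast (summable_nat_add_iff 1).mpr (Real.summable_nat_rpow.mpr (by linarith))
  rw [zetaK_eq_tsum k (by simp; linarith), ← tsum_mul_right]
  have hnorm := hsum.of_nonneg_of_le (fun _ ↦ norm_nonneg _) hbound
  exact (norm_tsum_le_tsum_norm hnorm).trans (hnorm.tsum_le_tsum hbound hsum)

theorem norm_c_mul_pow_div_factorial_le {k : ℕ} (hk : 1 ≤ k) {s : ℂ} (hs : 1 < s.re) (n : ℕ)
    {r : ℝ} (hr : 0 ≤ r) :
    ‖c n k s‖ * r ^ n / n.factorial ≤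
      (∑' m : ℕ, ((m : ℝ) + 1) ^ (-s.re)) * (Ring.choose (‖s‖ + n - 1) n * (r / k) ^ n) := by
  have hk0 : (k : ℝ) ≠ 0 := by positivity
  calc ‖c n k s‖ * r ^ n / n.factorial
      ≤ (∏ j ∈ range n, (‖s‖ + j)) * ((∑' m : ℕ, ((m : ℝ) + 1) ^ (-s.re)) * (k : ℝ)⁻¹ ^ n) *
          r ^ n / n.factorial := by
        rw [c, norm_mul]
        gcongr
        exacts [norm_prod_add_natCast_le s n, norm_zetaK_add_natCast_le hk hs n]
    _ = _ := by
        rw [Ring.choose_add_natCast_sub_one, div_pow, inv_pow]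
        field_simp

theorem stmt_3 (k : ℕ) (hk : 1 ≤ k) (s : ℂ) (hs : 1 < s.re)
    (α : ℂ) (hα : ‖α‖ < k) :
    ∑' n : ℕ, ‖c (n + 1) k s‖ * ‖α‖ ^ (n + 1) /
        ((n + 1).factorial : ℝ)
      ≤ (∑' m : ℕ, ((m : ℝ) + 1) ^ (-s.re)) *
        (1 - ‖α‖ / k) ^ (-‖s‖) := by
  set A := ∑' m : ℕ, ((m : ℝ) + 1) ^ (-s.re)
  set x := ‖α‖ / k
  have hx : |x| < 1 := by
    have hk0 : (0 : ℝ) < k := by exact_mod_cast hk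
    rw [abs_of_nonneg (by positivity)]
    exact (div_lt_one hk0).mpr hα
  have hbinom := (Real.hasSum_choose_mul_pow ‖s‖ hx).mul_left A
  have hmajorant_nonneg (n : ℕ) : 0 ≤ A * (Ring.choose (‖s‖ + n - 1) n * x ^ n) := by
    rw [Ring.choose_add_natCast_sub_one]
    have : 0 ≤ A := tsum_nonneg fun m ↦ by positivity
    positivity
  refine Real.tsum_le_of_sum_range_le (fun n ↦ by positivity) fun M ↦ ?_
  calc ∑ n ∈ range M, ‖c (n + 1) k s‖ * ‖α‖ ^ (n + 1) / ((n + 1).factorial : ℝ)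
      ≤ ∑ n ∈ range (M + 1), ‖c n k s‖ * ‖α‖ ^ n / n.factorial := by
        rw [sum_range_succ' _ M]
        exact le_add_of_nonneg_right (by positivity)
    _ ≤ ∑ n ∈ range (M + 1), A * (Ring.choose (‖s‖ + n - 1) n * x ^ n) :=
        sum_le_sum fun n _ ↦ norm_c_mul_pow_div_factorial_le hk hs n (norm_nonneg α)
    _ ≤ A * (1 - x) ^ (-‖s‖) := sum_le_hasSum _ (fun n _ ↦ hmajorant_nonneg n) hbinom
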